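/- The two-way channel per-slot sum-rate function R(π_1, π_2) = sup{ (1/2)·log(1 + h_1(π_1 − δ_1 + α_2 δ_2)/σ_2²) + (1/2)·log(1 + h_2(π_2 − δ_2 + α_1 δ_1)/σ_1²) : 0 ≤ δ_1 ≤ π_1, 0 ≤ δ_2 ≤ π_2 } is jointly concave in (π_1, π_2) on the set {(π_1, π_2) : π_1 ≥ 0, π_2 ≥ 0}. -/
import Mathlib


/-- The per-slot sum-rate of the two-way channel with energy cooperation:
supremum of the sum-rate over the admissible energy transfers. -/
noncomputable def perSlotRate (h1 h2 s1 s2 a1 a2 : ℝ) (π1 π2 : ℝ) : ℝ :=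
  sSup {r : ℝ | ∃ d1 d2 : ℝ, 0 ≤ d1 ∧ d1 ≤ π1 ∧ 0 ≤ d2 ∧ d2 ≤ π2 ∧
    r = 1/2 * Real.log (1 + h1 * (π1 - d1 + a2 * d2) / s2)
      + 1/2 * Real.log (1 + h2 * (π2 - d2 + a1 * d1) / s1)}

/-- The per-slot sum-rate function is jointly concave on the
nonnegative quadrant. -/
theorem stmt_3
    (h1 h2 s1 s2 a1 a2 : ℝ)
    (hh1 : 0 < h1) (hh2 : 0 < h2) (hs1 : 0 < s1) (hs2 : 0 < s2)
    (ha1 : a1 ∈ Set.Icc (0:ℝ) 1) (ha2 : a2 ∈ Set.Icc (0:ℝ) 1) :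
    ConcaveOn ℝ {x : ℝ × ℝ | 0 ≤ x.1 ∧ 0 ≤ x.2}
      (fun x => perSlotRate h1 h2 s1 s2 a1 a2 x.1 x.2) := by
  obtain ⟨ha1l, ha1u⟩ := ha1
  obtain ⟨ha2l, ha2u⟩ := ha2
  set S : ℝ → ℝ → Set ℝ := fun p1 p2 => {r : ℝ | ∃ d1 d2 : ℝ,
    0 ≤ d1 ∧ d1 ≤ p1 ∧ 0 ≤ d2 ∧ d2 ≤ p2 ∧
    r = 1/2 * Real.log (1 + h1 * (p1 - d1 + a2 * d2) / s2)
      + 1/2 * Real.log (1 + h2 * (p2 - d2 + a1 * d1) / s1)} with hS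
  have hR : ∀ p1 p2 : ℝ, perSlotRate h1 h2 s1 s2 a1 a2 p1 p2 = sSup (S p1 p2) :=
    fun _ _ => rfl
  -- positivity of log arguments
  have hpos1 : ∀ p1 d1 d2 : ℝ, 0 ≤ d1 → d1 ≤ p1 → 0 ≤ d2 →
      0 < 1 + h1 * (p1 - d1 + a2 * d2) / s2 := by
    intro p1 d1 d2 h0 hle h2'
    have hnn : 0 ≤ p1 - d1 + a2 * d2 := by nlinarith
    have := div_nonneg (mul_nonneg hh1.le hnn) hs2.le
    linarith
  have hpos2 : ∀ p2 d1 d2 : ℝ, 0 ≤ d2 → d2 ≤ p2 → 0 ≤ d1 →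
      0 < 1 + h2 * (p2 - d2 + a1 * d1) / s1 := by
    intro p2 d1 d2 h0 hle h1'
    have hnn : 0 ≤ p2 - d2 + a1 * d1 := by nlinarith
    have := div_nonneg (mul_nonneg hh2.le hnn) hs1.le
    linarith
  -- nonemptiness
  have hne : ∀ p1 p2 : ℝ, 0 ≤ p1 → 0 ≤ p2 → (S p1 p2).Nonempty := by
    intro p1 p2 hp1 hp2
    exact ⟨_, 0, 0, le_refl 0, hp1, le_refl 0, hp2, rfl⟩
  -- boundedness above
  have hbdd : ∀ p1 p2 : ℝ, 0 ≤ p1 → 0 ≤ p2 → BddAbove (S p1 p2) := by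
    intro p1 p2 hp1 hp2
    refine ⟨1/2 * Real.log (1 + h1 * (p1 + p2) / s2)
      + 1/2 * Real.log (1 + h2 * (p1 + p2) / s1), ?_⟩
    rintro r ⟨d1, d2, hd1, hd1p, hd2, hd2p, rfl⟩
    have hA : 1 + h1 * (p1 - d1 + a2 * d2) / s2 ≤ 1 + h1 * (p1 + p2) / s2 := by
      have : p1 - d1 + a2 * d2 ≤ p1 + p2 := by nlinarith
      have := (div_le_div_iff_of_pos_right hs2).mpr (mul_le_mul_of_nonneg_left this hh1.le)
      linarith
    have hB : 1 + h2 * (p2 - d2 + a1 * d1) / s1 ≤ 1 + h2 * (p1 + p2) / s1 := by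
      have : p2 - d2 + a1 * d1 ≤ p1 + p2 := by nlinarith
      have := (div_le_div_iff_of_pos_right hs1).mpr (mul_le_mul_of_nonneg_left this hh2.le)
      linarith
    have := Real.log_le_log (hpos1 p1 d1 d2 hd1 hd1p hd2) hA
    have := Real.log_le_log (hpos2 p2 d1 d2 hd2 hd2p hd1) hB
    linarith
  constructor
  · intro x hx y hy a b ha hb hab
    exact ⟨add_nonneg (mul_nonneg ha hx.1) (mul_nonneg hb hy.1),
           add_nonneg (mul_nonneg ha hx.2) (mul_nonneg hb hy.2)⟩
  · intro x hx y hy a b ha hb hab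
    rcases ha.eq_or_lt with ha0 | hapos
    · have hb1 : b = 1 := by linarith
      simp [← ha0, hb1]
    rcases hb.eq_or_lt with hb0 | hbpos
    · have ha1' : a = 1 := by linarith
      simp [← hb0, ha1']
    simp only [smul_eq_mul, hR]
    -- reduce to a statement about real coordinates
    have key : ∀ p1 p2 q1 q2 : ℝ, 0 ≤ p1 → 0 ≤ p2 → 0 ≤ q1 → 0 ≤ q2 →
        a * sSup (S p1 p2) + b * sSup (S q1 q2)
          ≤ sSup (S (a * p1 + b * q1) (a * p2 + b * q2)) := by
      intro p1 p2 q1 q2 hp1 hp2 hq1 hq2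
      set Z1 := a * p1 + b * q1 with hZ1
      set Z2 := a * p2 + b * q2 with hZ2
      have hZ1n : 0 ≤ Z1 := add_nonneg (mul_nonneg ha hp1) (mul_nonneg hb hq1)
      have hZ2n : 0 ≤ Z2 := add_nonneg (mul_nonneg ha hp2) (mul_nonneg hb hq2)
      set M := sSup (S Z1 Z2) with hM
      have step : ∀ r1 ∈ S p1 p2, ∀ r2 ∈ S q1 q2, a * r1 + b * r2 ≤ M := by
        rintro r1 ⟨d1, d2, hd1, hd1p, hd2, hd2p, rfl⟩
        rintro r2 ⟨e1, e2, he1, he1p, he2, he2p, rfl⟩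
        set D1 := a * d1 + b * e1 with hD1
        set D2 := a * d2 + b * e2 with hD2
        have hD1n : 0 ≤ D1 := add_nonneg (mul_nonneg ha hd1) (mul_nonneg hb he1)
        have hD2n : 0 ≤ D2 := add_nonneg (mul_nonneg ha hd2) (mul_nonneg hb he2)
        have hD1le : D1 ≤ Z1 := by
          rw [hD1, hZ1]
          have := mul_le_mul_of_nonneg_left hd1p ha
          have := mul_le_mul_of_nonneg_left he1p hb
          linarith
        have hD2le : D2 ≤ Z2 := by
          rw [hD2, hZ2]
          have := mul_le_mul_of_nonneg_left hd2p ha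
          have := mul_le_mul_of_nonneg_left he2p hb
          linarith
        have hmem : (1/2 * Real.log (1 + h1 * (Z1 - D1 + a2 * D2) / s2)
            + 1/2 * Real.log (1 + h2 * (Z2 - D2 + a1 * D1) / s1)) ∈ S Z1 Z2 :=
          ⟨D1, D2, hD1n, hD1le, hD2n, hD2le, rfl⟩
        have hu1 : (0:ℝ) < 1 + h1 * (p1 - d1 + a2 * d2) / s2 := hpos1 p1 d1 d2 hd1 hd1p hd2
        have hu2 : (0:ℝ) < 1 + h1 * (q1 - e1 + a2 * e2) / s2 := hpos1 q1 e1 e2 he1 he1p he2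
        have hv1 : (0:ℝ) < 1 + h2 * (p2 - d2 + a1 * d1) / s1 := hpos2 p2 d1 d2 hd2 hd2p hd1
        have hv2 : (0:ℝ) < 1 + h2 * (q2 - e2 + a1 * e1) / s1 := hpos2 q2 e1 e2 he2 he2p he1
        have harg1 : a * (1 + h1 * (p1 - d1 + a2 * d2) / s2)
            + b * (1 + h1 * (q1 - e1 + a2 * e2) / s2)
            = 1 + h1 * (Z1 - D1 + a2 * D2) / s2 := by
          rw [hZ1, hD1, hD2]
          field_simp
          linear_combination s2 * hab
        have harg2 : a * (1 + h2 * (p2 - d2 + a1 * d1) / s1)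
            + b * (1 + h2 * (q2 - e2 + a1 * e1) / s1)
            = 1 + h2 * (Z2 - D2 + a1 * D1) / s1 := by
          rw [hZ2, hD1, hD2]
          field_simp
          linear_combination s1 * hab
        have hlog1 := (strictConcaveOn_log_Ioi.concaveOn).2
          (Set.mem_Ioi.mpr hu1) (Set.mem_Ioi.mpr hu2) ha hb hab
        have hlog2 := (strictConcaveOn_log_Ioi.concaveOn).2
          (Set.mem_Ioi.mpr hv1) (Set.mem_Ioi.mpr hv2) ha hb hab
        simp only [smul_eq_mul] at hlog1 hlog2
        rw [harg1] at hlog1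
        rw [harg2] at hlog2
        have hle : a * (1/2 * Real.log (1 + h1 * (p1 - d1 + a2 * d2) / s2)
              + 1/2 * Real.log (1 + h2 * (p2 - d2 + a1 * d1) / s1))
            + b * (1/2 * Real.log (1 + h1 * (q1 - e1 + a2 * e2) / s2)
              + 1/2 * Real.log (1 + h2 * (q2 - e2 + a1 * e1) / s1))
            ≤ 1/2 * Real.log (1 + h1 * (Z1 - D1 + a2 * D2) / s2)
              + 1/2 * Real.log (1 + h2 * (Z2 - D2 + a1 * D1) / s1) := by
          linarith
        exact hle.trans (le_csSup (hbdd Z1 Z2 hZ1n hZ2n) hmem)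
      have hstep2 : ∀ r1 ∈ S p1 p2, b * sSup (S q1 q2) ≤ M - a * r1 := by
        intro r1 hr1
        have h3 : sSup (S q1 q2) ≤ (M - a * r1) / b :=
          csSup_le (hne q1 q2 hq1 hq2) fun r2 hr2 =>
            (le_div_iff₀ hbpos).mpr (by linarith [step r1 hr1 r2 hr2])
        have := (le_div_iff₀ hbpos).mp h3
        linarith
      have h4 : sSup (S p1 p2) ≤ (M - b * sSup (S q1 q2)) / a :=
        csSup_le (hne p1 p2 hp1 hp2) fun r1 hr1 =>
          (le_div_iff₀ hapos).mpr (by linarith [hstep2 r1 hr1])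
      have := (le_div_iff₀ hapos).mp h4
      linarith
    have := key x.1 x.2 y.1 y.2 hx.1 hx.2 hy.1 hy.2
    convert this using 3 <;> rfl
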